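/- There exists a computable stable function f : [ℕ]² → ℕ such that for every i ∈ ℕ the set B_i = {x ∈ ℕ : lim_s f(x, s) ≠ i} is hyperimmune. Consequently, every infinite f-thin set H satisfies H ⊆ B_i for some i ∈ ℕ, and that B_i is not H-hyperimmune. -/

import Mathlib

open Classical in
/-- The characteristic function of a set of naturals. -/
noncomputable def chi (Z : Set ℕ) : ℕ → ℕ := fun n => if n ∈ Z then 1 else 0

/-- Partial functions `ℕ →. ℕ` recursive in an oracle `O : ℕ → ℕ`. -/
inductive OracleRecursiveIn (O : ℕ → ℕ) : (ℕ →. ℕ) → Prop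
  | zero : OracleRecursiveIn O (pure 0)
  | succ : OracleRecursiveIn O ↑Nat.succ
  | left : OracleRecursiveIn O ↑fun n : ℕ => n.unpair.1
  | right : OracleRecursiveIn O ↑fun n : ℕ => n.unpair.2
  | oracle : OracleRecursiveIn O ↑O
  | pair {f g} : OracleRecursiveIn O f → OracleRecursiveIn O g →
      OracleRecursiveIn O fun n => Nat.pair <$> f n <*> g n
  | comp {f g} : OracleRecursiveIn O f → OracleRecursiveIn O g →
      OracleRecursiveIn O fun n => g n >>= f
  | prec {f g} : OracleRecursiveIn O f → OracleRecursiveIn O g →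
      OracleRecursiveIn O (Nat.unpaired fun a n =>
        n.rec (f a) fun y IH => do let i ← IH; g (Nat.pair a (Nat.pair y i)))
  | rfind {f} : OracleRecursiveIn O f →
      OracleRecursiveIn O fun a => Nat.rfind fun n => (fun m => m = 0) <$> f (Nat.pair a n)

/-- `f : ℕ → ℕ` is computable relative to (the characteristic function of) `Z`. -/
def FunComputableIn (Z : Set ℕ) (f : ℕ → ℕ) : Prop := OracleRecursiveIn (chi Z) f

/-- The set `S` is computable relative to `Z`. -/
def SetComputableIn (Z S : Set ℕ) : Prop := FunComputableIn Z (chi S)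

/-- The set `W` is computably enumerable relative to `Z`. -/
def CeIn (Z W : Set ℕ) : Prop := ∃ g : ℕ →. ℕ, OracleRecursiveIn (chi Z) g ∧ W = g.Dom

/-- The join `X ⊕ Z = {2n : n ∈ X} ∪ {2n+1 : n ∈ Z}`. -/
def join (X Z : Set ℕ) : Set ℕ :=
  {k | (∃ n ∈ X, k = 2 * n) ∨ (∃ n ∈ Z, k = 2 * n + 1)}

/-- `D k` is the finite set of naturals with canonical code `k`. -/
def D (k : ℕ) : Finset ℕ := Denumerable.ofNat (Finset ℕ) k

/-- `B` is `Z`-hyperimmune: every `Z`-c.e. array `(D (f i))_{i}` of pairwise disjoint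
finite sets has a member disjoint from `B`. -/
def Hyperimmune (Z B : Set ℕ) : Prop :=
  ∀ f : ℕ → ℕ, FunComputableIn Z f →
    (∀ i j, i ≠ j → Disjoint (D (f i)) (D (f j))) →
    ∃ i, ∀ x ∈ D (f i), x ∉ B

/-!
A finite-injury priority construction. Requirement `n = ⟨e, i⟩` reads the `e`-th partial
computable function as an array of codes of finite sets and tries to give colour `i` to every
element of one of its members. The state at stage `s` is a list of claims `(n, k)`: requirement
`n` holds the set `D k`. At each stage the strongest unclaimed requirement that sees, within `s`
steps, a member of its array lying above `n` and disjoint from the sets of stronger requirements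
claims it, and the weaker claims meeting it are cancelled; `f x s` is the colour of the claim
containing `x`, or `0`. Claims containing `x` belong to requirements below `x`, which eventually
stop acting, so `f` is stable. For a total array of pairwise disjoint sets only finitely many
members meet the finitely many numbers forbidden to requirement `⟨e, i⟩`, so it eventually holds
one of them for good and that member has limit colour `i`: every `B i` is hyperimmune. An infinite
thin set omitting colour `c` lies in `B c`, and its own increasing enumeration is an `H`-computable
array of disjoint singletons inside `B c`.
-/

/-! ### Canonical finite sets -/

def canonList (k : ℕ) : List ℕ := Denumerable.raise' (Denumerable.ofNat (List ℕ) k) 0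

theorem mem_D_iff_mem_canonList {x k : ℕ} : x ∈ D k ↔ x ∈ canonList k := by
  have hD : D k = (Denumerable.raise'Finset (Denumerable.ofNat (List ℕ) k) 0).map
      (Denumerable.eqv ℕ).symm.toEmbedding :=
    Denumerable.ofNat_of_decode rfl
  rw [hD]
  simp only [Denumerable.eqv, Equiv.symm_mk, Denumerable.raise'Finset, Finset.mem_map_equiv,
    Equiv.coe_fn_mk, Encodable.encode_nat, canonList]
  exact Multiset.mem_coe

def singletonCode (x : ℕ) : ℕ := Nat.pair x 0 + 1

theorem D_singletonCode (x : ℕ) : D (singletonCode x) = {x} := by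
  ext y
  simp [mem_D_iff_mem_canonList, canonList, singletonCode, Denumerable.list_ofNat_succ,
    Denumerable.raise']

theorem primrec_canonList : Primrec canonList := by
  let raiseStep : (ℕ × List ℕ) → ℕ → ℕ × List ℕ := fun p m =>
    (m + p.1 + 1, p.2 ++ [m + p.1])
  have hfold : ∀ (l : List ℕ) (n : ℕ) (acc : List ℕ),
      (l.foldl raiseStep (n, acc)).2 = acc ++ Denumerable.raise' l n := by
    intro l
    induction l with
    | nil => simp [Denumerable.raise']
    | cons m l ih => intro n acc; simp [raiseStep, Denumerable.raise', ih]
  have hstep : Primrec₂ fun (_ : ℕ) (q : (ℕ × List ℕ) × ℕ) => raiseStep q.1 q.2 := by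
    open Primrec in
    exact to₂ <| pair (succ.comp (nat_add.comp (snd.comp snd) (fst.comp (fst.comp snd))))
      (list_concat.comp (snd.comp (fst.comp snd)) (nat_add.comp (snd.comp snd)
        (fst.comp (fst.comp snd))))
  refine (Primrec.snd.comp (Primrec.list_foldl (Primrec.ofNat (List ℕ))
    (Primrec.const ((0, []) : ℕ × List ℕ)) hstep)).of_eq fun k => ?_
  simp [hfold, canonList]

theorem primrecRel_mem_D : PrimrecRel fun x k => x ∈ D k :=
  ((PrimrecRel.exists_mem_list Primrec.eq).comp (primrec_canonList.comp Primrec.snd)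
    Primrec.fst).of_eq fun _ => by simp [mem_D_iff_mem_canonList]

theorem PrimrecRel.forall_mem_D {α : Type*} [Primcodable α] {R : α → ℕ → Prop}
    (hR : PrimrecRel R) : PrimrecRel fun a k => ∀ x ∈ D k, R a x :=
  ((PrimrecRel.forall_mem_list hR.swap).comp (primrec_canonList.comp Primrec.snd)
    Primrec.fst).of_eq fun _ => by simp [mem_D_iff_mem_canonList]

theorem primrecRel_disjoint_D : PrimrecRel fun k k' => Disjoint (D k) (D k') :=
  (PrimrecRel.forall_mem_D primrecRel_mem_D.swap.not).swap.of_eq fun k k' => by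
    simp [Finset.disjoint_left, Function.swap]

/-! ### Relative computability -/

namespace OracleRecursiveIn

variable {O : ℕ → ℕ}

theorem of_partrec {f : ℕ →. ℕ} (hf : Nat.Partrec f) : OracleRecursiveIn O f := by
  induction hf with
  | zero => exact .zero
  | succ => exact .succ
  | left => exact .left
  | right => exact .right
  | pair _ _ ihf ihg => exact .pair ihf ihg
  | comp _ _ ihf ihg => exact .comp ihf ihg
  | prec _ _ ihf ihg => exact .prec ihf ihg
  | rfind _ ihf => exact .rfind ihf

theorem of_primrec {f : ℕ → ℕ} (hf : Primrec f) : OracleRecursiveIn O f :=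
  of_partrec (Nat.Partrec.of_primrec (Primrec.nat_iff.1 hf))

theorem partrec_of_oracle {f : ℕ →. ℕ} (hO : Nat.Partrec O) (hf : OracleRecursiveIn O f) :
    Nat.Partrec f := by
  induction hf with
  | zero => exact .zero
  | succ => exact .succ
  | left => exact .left
  | right => exact .right
  | oracle => exact hO
  | pair _ _ ihf ihg => exact .pair ihf ihg
  | comp _ _ ihf ihg => exact .comp ihf ihg
  | prec _ _ ihf ihg => exact .prec ihf ihg
  | rfind _ ihf => exact .rfind ihf

theorem of_eq {f g : ℕ →. ℕ} (hf : OracleRecursiveIn O f) (h : ∀ n, f n = g n) :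
    OracleRecursiveIn O g :=
  funext h ▸ hf

theorem comp_total {f g : ℕ → ℕ} (hf : OracleRecursiveIn O f) (hg : OracleRecursiveIn O g) :
    OracleRecursiveIn O fun n => f (g n) :=
  (OracleRecursiveIn.comp hf hg).of_eq fun n => Part.bind_some (g n) _

theorem pair_total {f g : ℕ → ℕ} (hf : OracleRecursiveIn O f) (hg : OracleRecursiveIn O g) :
    OracleRecursiveIn O fun n => Nat.pair (f n) (g n) :=
  (OracleRecursiveIn.pair hf hg).of_eq fun n => by simp [PFun.coe_val, Seq.seq]

theorem nat_rec_total {f g : ℕ → ℕ} (hf : OracleRecursiveIn O f)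
    (hg : OracleRecursiveIn O g) :
    OracleRecursiveIn O fun p =>
      Nat.rec (motive := fun _ => ℕ) (f p.unpair.1)
        (fun y IH => g (Nat.pair p.unpair.1 (Nat.pair y IH))) p.unpair.2 := by
  refine (OracleRecursiveIn.prec hf hg).of_eq fun p => ?_
  simp only [Nat.unpaired]
  induction p.unpair.2 with
  | zero => rfl
  | succ n ih =>
    simp only [PFun.coe_val] at ih ⊢
    rw [ih]
    simp

theorem nat_find {P : ℕ → ℕ → Prop} [DecidableRel P] (hP : ∀ a, ∃ n, P a n)
    {p : ℕ → ℕ} (hp : OracleRecursiveIn O p) (hpP : ∀ a n, p (Nat.pair a n) = 0 ↔ P a n) :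
    OracleRecursiveIn O fun a => Nat.find (hP a) := by
  refine (OracleRecursiveIn.rfind hp).of_eq fun a => ?_
  refine (Part.eq_some_iff.2 (Nat.mem_rfind.2 ⟨?_, fun hm => ?_⟩)).trans rfl
  · simpa [PFun.coe_val, hpP] using Nat.find_spec (hP a)
  · simpa [PFun.coe_val, hpP] using Nat.find_min (hP a) hm

end OracleRecursiveIn

theorem chi_eq_one_iff {H : Set ℕ} {x : ℕ} : chi H x = 1 ↔ x ∈ H := by
  classical
  by_cases hx : x ∈ H <;> simp [chi, hx]

theorem Set.Infinite.exists_ge_mem {H : Set ℕ} (hH : H.Infinite) (b : ℕ) :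
    ∃ x, b ≤ x ∧ x ∈ H :=
  let ⟨x, hx, hbx⟩ := hH.exists_gt b
  ⟨x, hbx.le, hx⟩

section InfiniteOracle

variable {H : Set ℕ} (hH : H.Infinite)

open Classical in
noncomputable def nextMem (b : ℕ) : ℕ := Nat.find (hH.exists_ge_mem b)

theorem le_nextMem (b : ℕ) : b ≤ nextMem hH b := by
  classical
  exact (Nat.find_spec (hH.exists_ge_mem b)).1

theorem nextMem_mem (b : ℕ) : nextMem hH b ∈ H := by
  classical
  exact (Nat.find_spec (hH.exists_ge_mem b)).2

theorem oracleRecursiveIn_nextMem : OracleRecursiveIn (chi H) (nextMem hH) := by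
  classical
  have hF : Primrec fun m : ℕ =>
      (m.unpair.1.unpair.1 - m.unpair.1.unpair.2) + (1 - m.unpair.2) := by
    open Primrec in
    exact nat_add.comp (nat_sub.comp (fst.comp (unpair.comp (fst.comp unpair)))
      (snd.comp (unpair.comp (fst.comp unpair)))) (nat_sub.comp (const 1) (snd.comp unpair))
  have hsnd : Primrec fun n : ℕ => n.unpair.2 := Primrec.snd.comp Primrec.unpair
  have hchi : OracleRecursiveIn (chi H) fun n => chi H n.unpair.2 :=
    .comp_total .oracle (.of_primrec hsnd)
  have hpair : OracleRecursiveIn (chi H) fun n => Nat.pair n (chi H n.unpair.2) :=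
    .pair_total (.of_primrec Primrec.id) hchi
  have htest := OracleRecursiveIn.comp_total (OracleRecursiveIn.of_primrec hF) hpair
  refine OracleRecursiveIn.nat_find (hH.exists_ge_mem) htest ?_
  -- `(b - x) + (1 - chi H x)` vanishes exactly when `b ≤ x ∈ H`
  intro b x
  have hchi_le : chi H x ≤ 1 := by unfold chi; split_ifs <;> simp
  simp only [Nat.unpair_pair, Nat.add_eq_zero_iff, Nat.sub_eq_zero_iff_le, ← chi_eq_one_iff]
  omega

noncomputable def enumMem : ℕ → ℕ
  | 0 => nextMem hH 0
  | i + 1 => nextMem hH (enumMem i + 1)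

theorem enumMem_mem (i : ℕ) : enumMem hH i ∈ H := by
  cases i <;> exact nextMem_mem hH _

theorem strictMono_enumMem : StrictMono (enumMem hH) :=
  strictMono_nat_of_lt_succ fun _ => Nat.lt_of_succ_le (le_nextMem hH _)

theorem oracleRecursiveIn_enumMem : OracleRecursiveIn (chi H) (enumMem hH) := by
  have hsucc : OracleRecursiveIn (chi H) fun q => nextMem hH (q.unpair.2.unpair.2 + 1) :=
    .comp_total (oracleRecursiveIn_nextMem hH) (.of_primrec (Primrec.succ.comp
      (Primrec.snd.comp (Primrec.unpair.comp (Primrec.snd.comp Primrec.unpair)))))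
  have hrec := OracleRecursiveIn.nat_rec_total (.of_primrec (Primrec.const (nextMem hH 0))) hsucc
  have hi : OracleRecursiveIn (chi H) fun i => Nat.pair 0 i :=
    .of_primrec (Primrec₂.natPair.comp (Primrec.const 0) Primrec.id)
  have hrec_eq : ∀ i, Nat.rec (motive := fun _ => ℕ) (nextMem hH 0)
      (fun _ IH => nextMem hH (IH + 1)) i = enumMem hH i := by
    intro i
    induction i with
    | zero => rfl
    | succ i ih => rw [enumMem, ← ih]
  refine (OracleRecursiveIn.comp_total hrec hi).of_eq fun i => ?_
  simp [Nat.unpair_pair, hrec_eq]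

end InfiniteOracle

theorem not_hyperimmune_of_subset {H B : Set ℕ} (hH : H.Infinite) (hHB : H ⊆ B) :
    ¬ Hyperimmune H B := by
  intro hB
  have hdisj : ∀ i j, i ≠ j →
      Disjoint (D (singletonCode (enumMem hH i))) (D (singletonCode (enumMem hH j))) := by
    intro i j hij
    simpa [D_singletonCode] using (strictMono_enumMem hH).injective.ne hij
  have hcode : OracleRecursiveIn (chi H) singletonCode :=
    .of_primrec (Primrec.succ.comp (Primrec₂.natPair.comp Primrec.id (Primrec.const 0)))
  have harray := OracleRecursiveIn.comp_total hcode (oracleRecursiveIn_enumMem hH)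
  obtain ⟨i, hi⟩ := hB _ harray hdisj
  exact hi _ (by simp [D_singletonCode]) (hHB (enumMem_mem hH i))

theorem List.exists_le_findSome?_range_eq_some {β : Type*} {f : ℕ → Option β} {n s : ℕ}
    (hn : n < s) (hfn : f n ≠ none) :
    ∃ m ≤ n, ∃ b, (List.range s).findSome? f = some b ∧ f m = some b := by
  induction s with
  | zero => omega
  | succ s ih =>
    rw [List.range_succ, List.findSome?_append]
    rcases Nat.lt_succ_iff_lt_or_eq.1 hn with hn | rfl
    · obtain ⟨m, hm, b, hb, hfm⟩ := ih hn
      exact ⟨m, hm, b, by simp [hb], hfm⟩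
    · cases hfind : (List.range n).findSome? f with
      | some b =>
        obtain ⟨m, hm, hfm⟩ := List.exists_of_findSome?_eq_some hfind
        exact ⟨m, (List.mem_range.1 hm).le, b, by simp, hfm⟩
      | none =>
        obtain ⟨b, hb⟩ := Option.ne_none_iff_exists'.1 hfn
        exact ⟨n, le_rfl, b, by simp [hb], hb⟩

theorem Primrec.list_findSome? {α β σ : Type*} [Primcodable α] [Primcodable β]
    [Primcodable σ] {f : α → List β} {g : α → β → Option σ} (hf : Primrec f)
    (hg : Primrec₂ g) :
    Primrec fun a => (f a).findSome? (g a) :=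
  (Primrec.list_head?.comp (Primrec.listFilterMap hf hg)).of_eq fun _ => List.head?_filterMap

theorem Finset.exists_disjoint_of_pairwise_disjoint {ι α : Type*} [Infinite ι]
    {F : ι → Finset α} (hF : Pairwise fun i j => Disjoint (F i) (F j)) (V : Finset α) :
    ∃ j, Disjoint (F j) V := by
  have hfin : {j | ¬ Disjoint (F j) V}.Finite := by
    refine (V.finite_toSet.biUnion (t := fun v => {j | v ∈ F j}) fun v _ => ?_).subset
      fun j hj => ?_
    · refine Set.Subsingleton.finite fun i hi j hj => ?_
      by_contra hij
      exact Finset.disjoint_left.1 (hF hij) hi hj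
    · obtain ⟨v, hvj, hvV⟩ := Finset.not_disjoint_iff.1 hj
      exact Set.mem_biUnion hvV hvj
  obtain ⟨j, hj⟩ := hfin.infinite_compl.nonempty
  exact ⟨j, not_not.1 hj⟩

/-! ### The priority construction -/

namespace HyperimmuneColoring

open Nat.Partrec (Code)
open Nat.Partrec.Code Filter

def arrayCode (n : ℕ) : Code := Denumerable.ofNat Code n.unpair.1

def Admissible (L : List (ℕ × ℕ)) (n k : ℕ) : Prop :=
  (∀ x ∈ D k, n < x) ∧ ∀ p ∈ L, p.1 < n → Disjoint (D k) (D p.2)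

instance (L : List (ℕ × ℕ)) (n k : ℕ) : Decidable (Admissible L n k) := by
  unfold Admissible; infer_instance

def claim (s : ℕ) (L : List (ℕ × ℕ)) (n : ℕ) : Option ℕ :=
  (List.range s).findSome? fun j =>
    (evaln s (arrayCode n) j).bind fun k => if Admissible L n k then some k else none

def action (s : ℕ) (L : List (ℕ × ℕ)) : Option (ℕ × ℕ) :=
  (List.range s).findSome? fun n =>
    if n ∈ L.map Prod.fst then none else (claim s L n).map (n, ·)

def step (s : ℕ) (L : List (ℕ × ℕ)) : List (ℕ × ℕ) :=
  (action s L).elim L fun a => a :: L.filter fun p => Disjoint (D a.2) (D p.2)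

def state : ℕ → List (ℕ × ℕ)
  | 0 => []
  | s + 1 => step s (state s)

def color (L : List (ℕ × ℕ)) (x : ℕ) : ℕ :=
  (L.findSome? fun p => if x ∈ D p.2 then some p.1.unpair.2 else none).getD 0

def stageColor (x s : ℕ) : ℕ := color (state s) x

theorem action_eq_some {s n k : ℕ} {L : List (ℕ × ℕ)} (h : action s L = some (n, k)) :
    n ∉ L.map Prod.fst ∧ Admissible L n k ∧ ∃ j, k ∈ evaln s (arrayCode n) j := by
  obtain ⟨m, -, hm⟩ := List.exists_of_findSome?_eq_some h
  split_ifs at hm with hfree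
  obtain ⟨k', hclaim, rfl, rfl⟩ : ∃ k', claim s L m = some k' ∧ m = n ∧ k' = k := by
    simpa using hm
  obtain ⟨j, -, hj⟩ := List.exists_of_findSome?_eq_some hclaim
  obtain ⟨k'', hev, hk''⟩ := Option.bind_eq_some_iff.1 hj
  split_ifs at hk'' with hadm
  cases hk''
  exact ⟨hfree, hadm, j, hev⟩

theorem exists_action_le {s n k j : ℕ} {L : List (ℕ × ℕ)} (hn : n < s)
    (hfree : n ∉ L.map Prod.fst) (hadm : Admissible L n k) (hk : k ∈ evaln s (arrayCode n) j) :
    ∃ m ≤ n, ∃ k', action s L = some (m, k') := by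
  have hclaim : claim s L n ≠ none := by
    rw [claim, Ne, List.findSome?_eq_none_iff]
    intro h
    simpa [Option.mem_def.1 hk, hadm] using h j (List.mem_range.2 (evaln_bound hk))
  obtain ⟨m, hm, ⟨m', k'⟩, hact, hfm⟩ := List.exists_le_findSome?_range_eq_some hn
    (f := fun n => if n ∈ L.map Prod.fst then none else (claim s L n).map (n, ·))
    (by simpa [hfree] using hclaim)
  obtain rfl : m = m' := by
    split_ifs at hfm
    obtain ⟨_, -, h⟩ := Option.map_eq_some_iff.1 hfm
    exact congrArg Prod.fst h
  exact ⟨m, hm, k', hact⟩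

theorem step_of_action_eq_none {s : ℕ} {L : List (ℕ × ℕ)} (h : action s L = none) :
    step s L = L := by
  simp [step, h]

theorem step_of_action_eq_some {s : ℕ} {L : List (ℕ × ℕ)} {a : ℕ × ℕ}
    (h : action s L = some a) :
    step s L = a :: L.filter fun p => Disjoint (D a.2) (D p.2) := by
  simp [step, h]

structure WellFormed (L : List (ℕ × ℕ)) : Prop where
  lt_of_mem : ∀ p ∈ L, ∀ x ∈ D p.2, p.1 < x
  pairwise_disjoint : L.Pairwise fun p q => Disjoint (D p.2) (D q.2)
  mem_eval : ∀ p ∈ L, ∃ j, p.2 ∈ (arrayCode p.1).eval j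

theorem WellFormed.step {L : List (ℕ × ℕ)} (hL : WellFormed L) (s : ℕ) :
    WellFormed (step s L) := by
  cases hact : action s L with
  | none => rwa [step_of_action_eq_none hact]
  | some a =>
    obtain ⟨n, k⟩ := a
    obtain ⟨-, hadm, j, hj⟩ := action_eq_some hact
    rw [step_of_action_eq_some hact]
    refine ⟨?_, ?_, ?_⟩
    · simp only [List.mem_cons, List.mem_filter]
      rintro p (rfl | ⟨hp, -⟩)
      exacts [hadm.1, hL.lt_of_mem p hp]
    · exact List.Pairwise.cons (fun q hq => by simpa using (List.mem_filter.1 hq).2)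
        (hL.pairwise_disjoint.filter _)
    · simp only [List.mem_cons, List.mem_filter]
      rintro p (rfl | ⟨hp, -⟩)
      exacts [⟨j, evaln_sound hj⟩, hL.mem_eval p hp]

theorem wellFormed_state (s : ℕ) : WellFormed (state s) := by
  induction s with
  | zero => exact ⟨by simp [state], by simp [state], by simp [state]⟩
  | succ s ih => exact ih.step s

def Acts (m s : ℕ) : Prop := ∃ k, action s (state s) = some (m, k)

theorem not_acts_of_mem {p : ℕ × ℕ} {s : ℕ} (hp : p ∈ state s) : ¬ Acts p.1 s :=
  fun ⟨_, h⟩ => (action_eq_some h).1 (List.mem_map_of_mem hp)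

theorem mem_state_succ {p : ℕ × ℕ} {s : ℕ} (hp : p ∈ state s)
    (h : ∀ m < p.1, ¬ Acts m s) : p ∈ state (s + 1) := by
  rw [state]
  cases hact : action s (state s) with
  | none => rwa [step_of_action_eq_none hact]
  | some a =>
    obtain ⟨n, k⟩ := a
    have hlt : p.1 < n := by
      rcases lt_trichotomy p.1 n with hlt | rfl | hgt
      · exact hlt
      · exact absurd ⟨k, hact⟩ (not_acts_of_mem hp)
      · exact absurd ⟨k, hact⟩ (h n hgt)
    rw [step_of_action_eq_some hact]
    exact List.mem_cons_of_mem _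
      (List.mem_filter.2 ⟨hp, by simpa using (action_eq_some hact).2.1.2 p hp hlt⟩)

theorem action_eq_of_mem_state_succ {q : ℕ × ℕ} {s : ℕ} (hq : q ∈ state (s + 1))
    (hq' : q ∉ state s) : action s (state s) = some q := by
  rw [state] at hq
  cases hact : action s (state s) with
  | none => rw [step_of_action_eq_none hact] at hq; exact absurd hq hq'
  | some a =>
    rw [step_of_action_eq_some hact, List.mem_cons, List.mem_filter] at hq
    rcases hq with rfl | ⟨hq, -⟩
    exacts [rfl, absurd hq hq']

theorem mem_state_of_le {p : ℕ × ℕ} {s t : ℕ} (hp : p ∈ state s)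
    (h : ∀ t ≥ s, ∀ m < p.1, ¬ Acts m t) (hst : s ≤ t) : p ∈ state t := by
  induction t, hst using Nat.le_induction with
  | base => exact hp
  | succ t hst ih => exact mem_state_succ ih (h t hst)

/-- Once the stronger requirements are quiet, a requirement that acts claims a set that is never
cancelled, so it never acts again. -/
theorem eventually_quiet (n : ℕ) : ∃ S, ∀ s ≥ S, ∀ m < n, ¬ Acts m s := by
  induction n with
  | zero => exact ⟨0, fun _ _ _ hm => absurd hm (Nat.not_lt_zero _)⟩
  | succ n ih =>
    obtain ⟨S₀, hS₀⟩ := ih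
    by_cases hacts : ∃ s ≥ S₀, Acts n s
    · obtain ⟨s₀, hs₀, k, hk⟩ := hacts
      have hmem : (n, k) ∈ state (s₀ + 1) := by
        rw [state, step_of_action_eq_some hk]
        exact List.mem_cons_self
      refine ⟨s₀ + 1, fun s hs m hm => ?_⟩
      rcases Nat.lt_succ_iff_lt_or_eq.1 hm with hm | rfl
      · exact hS₀ s (by omega) m hm
      · exact not_acts_of_mem
          (mem_state_of_le hmem (fun t ht => hS₀ t (by omega)) hs)
    · push Not at hacts
      refine ⟨S₀, fun s hs m hm => ?_⟩
      rcases Nat.lt_succ_iff_lt_or_eq.1 hm with hm | rfl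
      exacts [hS₀ s hs m hm, hacts s hs]

theorem mem_state_iff_of_quiet {n S s : ℕ} (hS : ∀ s ≥ S, ∀ m < n, ¬ Acts m s)
    (hs : S ≤ s) {p : ℕ × ℕ} (hp : p.1 < n) : p ∈ state s ↔ p ∈ state S := by
  refine ⟨fun hmem => ?_, fun hmem =>
    mem_state_of_le hmem (fun t ht m hm => hS t ht m (hm.trans hp)) hs⟩
  induction s, hs using Nat.le_induction with
  | base => exact hmem
  | succ s hs ih =>
    by_contra hnot
    have hprev : p ∉ state s := fun h => hnot (ih h)
    exact hS s hs p.1 hp ⟨p.2, action_eq_of_mem_state_succ hmem hprev⟩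

theorem color_eq_of_mem {L : List (ℕ × ℕ)}
    (hL : L.Pairwise fun p q => Disjoint (D p.2) (D q.2))
    {p : ℕ × ℕ} (hp : p ∈ L) {x : ℕ} (hx : x ∈ D p.2) : color L x = p.1.unpair.2 := by
  have : Std.Symm fun p q : ℕ × ℕ => Disjoint (D p.2) (D q.2) := ⟨fun _ _ h => h.symm⟩
  obtain ⟨c, hc⟩ : ∃ c, L.findSome? (fun p => if x ∈ D p.2 then some p.1.unpair.2 else none)
      = some c := by
    refine Option.ne_none_iff_exists'.1 fun h => ?_
    simpa [hx] using List.findSome?_eq_none_iff.1 h p hp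
  obtain ⟨q, hq, hqc⟩ := List.exists_of_findSome?_eq_some hc
  split_ifs at hqc with hxq
  obtain rfl : p = q := by
    by_contra hpq
    exact Finset.disjoint_left.1 (hL.forall hp hq hpq) hx hxq
  simp [color, hc, ← Option.some_inj.1 hqc]

theorem color_eq_zero {L : List (ℕ × ℕ)} {x : ℕ} (h : ∀ p ∈ L, x ∉ D p.2) :
    color L x = 0 := by
  rw [color, List.findSome?_eq_none_iff.2 fun p hp => by simp [h p hp]]
  rfl

theorem color_congr {L L' : List (ℕ × ℕ)} (hL : L.Pairwise fun p q => Disjoint (D p.2) (D q.2))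
    (hL' : L'.Pairwise fun p q => Disjoint (D p.2) (D q.2)) {x : ℕ}
    (h : ∀ p, x ∈ D p.2 → (p ∈ L ↔ p ∈ L')) : color L x = color L' x := by
  by_cases hx : ∃ p ∈ L, x ∈ D p.2
  · obtain ⟨p, hp, hxp⟩ := hx
    rw [color_eq_of_mem hL hp hxp, color_eq_of_mem hL' ((h p hxp).1 hp) hxp]
  · push Not at hx
    rw [color_eq_zero hx, color_eq_zero fun p hp hxp => hx p ((h p hxp).2 hp) hxp]

theorem exists_eventually_stageColor_eq (x : ℕ) :
    ∃ c, ∀ᶠ s in atTop, stageColor x s = c := by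
  obtain ⟨S, hS⟩ := eventually_quiet x
  refine ⟨stageColor x S, Filter.eventually_atTop.2 ⟨S, fun s hs => ?_⟩⟩
  refine color_congr (wellFormed_state s).pairwise_disjoint (wellFormed_state S).pairwise_disjoint
    fun p hxp => ⟨fun hp => ?_, fun hp => ?_⟩
  · exact (mem_state_iff_of_quiet hS hs ((wellFormed_state s).lt_of_mem p hp x hxp)).1 hp
  · exact (mem_state_iff_of_quiet hS hs ((wellFormed_state S).lt_of_mem p hp x hxp)).2 hp

noncomputable def limColor (x : ℕ) : ℕ := (exists_eventually_stageColor_eq x).choose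

theorem eventually_stageColor_eq_limColor (x : ℕ) :
    ∀ᶠ s in atTop, stageColor x s = limColor x :=
  (exists_eventually_stageColor_eq x).choose_spec

theorem exists_claimed_of_quiet {n S : ℕ} (hS : ∀ s ≥ S, ∀ m < n + 1, ¬ Acts m s)
    {g : ℕ → ℕ} (hc : (arrayCode n).eval = g)
    (hdisj : Pairwise fun j j' => Disjoint (D (g j)) (D (g j'))) :
    ∃ s ≥ S, n ∈ (state s).map Prod.fst := by
  by_contra! hfree
  obtain ⟨j, hj⟩ := Finset.exists_disjoint_of_pairwise_disjoint hdisj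
    (Finset.range (n + 1) ∪ (state S).toFinset.biUnion fun p => D p.2)
  rw [Finset.disjoint_union_right] at hj
  obtain ⟨t, ht⟩ := evaln_complete.1 (show g j ∈ (arrayCode n).eval j by simp [hc])
  set s := max (max S (n + 1)) t
  have hadm : Admissible (state s) n (g j) := by
    refine ⟨fun x hx => ?_, fun p hp hpn => ?_⟩
    · simpa using Finset.disjoint_left.1 hj.1 hx
    · have hpS := (mem_state_iff_of_quiet hS (by omega) (by omega)).1 hp
      exact Finset.disjoint_of_subset_right
        (Finset.subset_biUnion_of_mem (fun p => D p.2) (List.mem_toFinset.2 hpS)) hj.2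
  obtain ⟨m, hm, k, hact⟩ := exists_action_le (s := s) (by omega) (hfree s (by omega)) hadm
    (evaln_mono (le_max_right _ _) ht)
  exact hS s (by omega) m (by omega) ⟨k, hact⟩

theorem exists_limColor_eq (i : ℕ) {g : ℕ → ℕ} (hg : Nat.Partrec g)
    (hdisj : Pairwise fun j j' => Disjoint (D (g j)) (D (g j'))) :
    ∃ j, ∀ x ∈ D (g j), limColor x = i := by
  obtain ⟨c, hc⟩ := exists_code.1 hg
  set n := Nat.pair (Encodable.encode c) i
  have hcode : arrayCode n = c := by simp [n, arrayCode, Denumerable.ofNat_encode]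
  obtain ⟨S, hS⟩ := eventually_quiet (n + 1)
  obtain ⟨s, hs, ⟨m, k⟩, hmem, rfl⟩ : ∃ s ≥ S, ∃ p ∈ state s, p.1 = n := by
    simpa using exists_claimed_of_quiet hS (hcode ▸ hc) hdisj
  obtain ⟨j, hj⟩ := (wellFormed_state s).mem_eval _ hmem
  rw [hcode, hc] at hj
  obtain rfl : k = g j := by simpa using hj
  refine ⟨j, fun x hx => ?_⟩
  obtain ⟨t, ht, hst⟩ :=
    ((eventually_stageColor_eq_limColor x).and (Filter.eventually_ge_atTop s)).exists
  rw [← ht, stageColor, color_eq_of_mem (wellFormed_state t).pairwise_disjoint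
    (mem_state_of_le hmem (fun t' ht' m hm => hS t' (hs.trans ht') m (by omega)) hst) hx]
  simp [n]

/-! ### Computability of the construction -/

open Primrec in
theorem primrecPred_admissible :
    PrimrecPred fun a : List (ℕ × ℕ) × ℕ × ℕ => Admissible a.1 a.2.1 a.2.2 := by
  have hbound : PrimrecPred fun a : List (ℕ × ℕ) × ℕ × ℕ =>
      ∀ x ∈ D a.2.2, a.2.1 < x :=
    (PrimrecRel.forall_mem_D nat_lt).comp (fst.comp snd) (snd.comp snd)
  have hlt : PrimrecRel fun (p a : ℕ × ℕ) => p.1 < a.1 :=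
    nat_lt.comp (fst.comp fst) (fst.comp snd)
  have hdisj : PrimrecRel fun (p a : ℕ × ℕ) => Disjoint (D a.2) (D p.2) :=
    primrecRel_disjoint_D.comp (snd.comp snd) (snd.comp fst)
  have hentry : PrimrecRel fun (p a : ℕ × ℕ) => p.1 < a.1 → Disjoint (D a.2) (D p.2) :=
    (hlt.not.or hdisj).of_eq fun _ => imp_iff_not_or.symm
  exact (hbound.and ((PrimrecRel.forall_mem_list hentry).comp fst snd)).of_eq fun _ => Iff.rfl

open Primrec in
theorem primrec_claim :
    Primrec fun a : (ℕ × List (ℕ × ℕ)) × ℕ => claim a.1.1 a.1.2 a.2 := by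
  have harrayCode : Primrec arrayCode := (Primrec.ofNat Code).comp (fst.comp unpair)
  have hevaln : Primrec₂ fun (a : (ℕ × List (ℕ × ℕ)) × ℕ) (j : ℕ) =>
      evaln a.1.1 (arrayCode a.2) j :=
    primrec_evaln.comp (pair (pair (fst.comp (fst.comp fst)) (harrayCode.comp (snd.comp fst))) snd)
  have hguard : Primrec₂ fun (b : ((ℕ × List (ℕ × ℕ)) × ℕ) × ℕ) (k : ℕ) =>
      if Admissible b.1.1.2 b.1.2 k then some k else none :=
    Primrec.ite (primrecPred_admissible.comp (pair (snd.comp (fst.comp (fst.comp fst)))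
      (pair (snd.comp (fst.comp fst)) snd))) (option_some.comp snd) (const none)
  exact Primrec.list_findSome? (list_range.comp (fst.comp fst)) (option_bind hevaln hguard)

open Primrec in
theorem primrec₂_action : Primrec₂ action := by
  have hclaimed : PrimrecRel fun (a : ℕ × List (ℕ × ℕ)) (n : ℕ) =>
      n ∈ a.2.map Prod.fst :=
    ((PrimrecRel.exists_mem_list (R := fun (p : ℕ × ℕ) (n : ℕ) => p.1 = n)
      (Primrec.eq.comp (fst.comp fst) snd)).comp
      (snd.comp fst) snd).of_eq fun _ => by simp
  have hclaim : Primrec₂ fun (a : ℕ × List (ℕ × ℕ)) (n : ℕ) =>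
      (claim a.1 a.2 n).map (n, ·) :=
    option_map primrec_claim (pair (snd.comp fst) snd).to₂
  exact Primrec.list_findSome? (list_range.comp fst) (Primrec.ite hclaimed (const none) hclaim)

open Primrec in
theorem primrec₂_step : Primrec₂ step := by
  have hfilter : Primrec₂ fun (a : ℕ × List (ℕ × ℕ)) (b : ℕ × ℕ) =>
      b :: a.2.filter fun p => Disjoint (D b.2) (D p.2) :=
    list_cons.comp snd ((PrimrecRel.listFilter
      (R := fun (p b : ℕ × ℕ) => Disjoint (D b.2) (D p.2))
      (primrecRel_disjoint_D.comp (snd.comp snd) (snd.comp fst))).comp (snd.comp fst) snd)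
  exact (option_casesOn primrec₂_action snd hfilter).of_eq fun a => by
    cases h : action a.1 a.2 <;> simp [step, h]

open Primrec in
theorem primrec_state : Primrec state :=
  (nat_rec' Primrec.id (const []) (primrec₂_step.comp (fst.comp snd) (snd.comp snd)).to₂).of_eq
    fun s => by induction s <;> simp_all [state]

open Primrec in
theorem primrec₂_stageColor : Primrec₂ stageColor := by
  have hcolor : Primrec₂ color := by
    have hfind : Primrec₂ fun (a : List (ℕ × ℕ) × ℕ) (p : ℕ × ℕ) =>
        if a.2 ∈ D p.2 then some p.1.unpair.2 else none :=
      Primrec.ite (primrecRel_mem_D.comp (snd.comp fst) (snd.comp snd))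
        (option_some.comp (snd.comp (unpair.comp (fst.comp snd)))) (const none)
    exact option_getD.comp (Primrec.list_findSome? fst hfind) (const 0)
  exact hcolor.comp (primrec_state.comp snd) fst

end HyperimmuneColoring

theorem nat_partrec_chi_empty : Nat.Partrec (chi ∅) := by
  have : chi ∅ = fun _ => 0 := funext fun _ => by simp [chi]
  rw [this]
  exact Nat.Partrec.of_primrec (Primrec.nat_iff.1 (Primrec.const 0))

theorem subset_setOf_ne_of_thin {f : ℕ → ℕ → ℕ} {l : ℕ → ℕ}
    (hl : ∀ x, ∀ᶠ s in Filter.atTop, f x s = l x) {H : Set ℕ} (hH : H.Infinite) {c : ℕ}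
    (hc : ∀ x ∈ H, ∀ y ∈ H, x < y → f x y ≠ c) : H ⊆ {x | l x ≠ c} := by
  intro x hx
  obtain ⟨y, ⟨hfy, hxy⟩, hy⟩ := (((hl x).and (Filter.eventually_gt_atTop x)).and_frequently
    (Nat.frequently_atTop_iff_infinite.2 hH)).exists
  exact fun hlc => hc x hx y hy hxy (hfy.trans hlc)

/-- There is a computable stable coloring `f : [ℕ]² → ℕ` (represented by
`f x s` for `x < s`, with limit function `l`) such that every
`B i = {x | lim_s f(x,s) ≠ i}` is hyperimmune; consequently every infinite
`f`-thin set `H` is contained in some `B i`, and that `B i` is not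
`H`-hyperimmune. -/
theorem stmt2 :
    ∃ (f : ℕ → ℕ → ℕ) (l : ℕ → ℕ),
      FunComputableIn ∅ (fun k => f k.unpair.1 k.unpair.2) ∧
      (∀ x : ℕ, ∀ᶠ s in Filter.atTop, f x s = l x) ∧
      (∀ i : ℕ, Hyperimmune ∅ {x | l x ≠ i}) ∧
      (∀ H : Set ℕ, H.Infinite →
        (∃ c : ℕ, ∀ x ∈ H, ∀ y ∈ H, x < y → f x y ≠ c) →
        ∃ i : ℕ, H ⊆ {x | l x ≠ i} ∧ ¬ Hyperimmune H {x | l x ≠ i}) := by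
  refine ⟨HyperimmuneColoring.stageColor, HyperimmuneColoring.limColor, ?_,
    HyperimmuneColoring.eventually_stageColor_eq_limColor, ?_, ?_⟩
  · exact OracleRecursiveIn.of_primrec (HyperimmuneColoring.primrec₂_stageColor.comp
      (Primrec.fst.comp Primrec.unpair) (Primrec.snd.comp Primrec.unpair))
  · intro i g hg hdisj
    obtain ⟨j, hj⟩ := HyperimmuneColoring.exists_limColor_eq i
      (OracleRecursiveIn.partrec_of_oracle nat_partrec_chi_empty hg) fun _ _ => hdisj _ _
    exact ⟨j, fun x hx hne => hne (hj x hx)⟩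
  · rintro H hH ⟨c, hc⟩
    have hsub :=
      subset_setOf_ne_of_thin HyperimmuneColoring.eventually_stageColor_eq_limColor hH hc
    exact ⟨c, hsub, not_hyperimmune_of_subset hH hsub⟩
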